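/- arXiv:1309.3665 — 3 statements merged into one kernel-verified Lean document; each statement's English description precedes it below -/
import Mathlib

section
/- Let n ≥ 5 and let E : ℕ → ℕ be any function such that ∑_{i=0}^{k} E(i) counts ≤k-edges of a good drawing D of K_n, and suppose the number of crossings of D equals cr(D) = 2·∑_{k=0}^{⌊n/2⌋-2} F(k) − (1/2)·C(n,2)·⌊(n-2)/2⌋ − (1/2)·(1+(-1)^n)·F(⌊n/2⌋-2), where F(k) = ∑_{i=0}^{k}(k+1-i)E(i). If F(k) ≥ 3·C(k+3,3) for all 0 ≤ k ≤ ⌊(n-3)/2⌋, then cr(D) ≥ Z(n). -/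
/-!
Summing the hypotheses `F k ≥ 3·C(k+3,3)` with the hockey-stick identity gives
`∑_{k<t} F k ≥ 3·C(t+3,4)`. Substituting this (and, for even `n`, the bound on the last term
`F (n/2-2)`, which the formula counts only once) into the expression for `cr` yields exactly
`Z n` in both parities.
-/

/-- `Z n` is the Harary-Hill number `⌊n/2⌋·⌊(n-1)/2⌋·⌊(n-2)/2⌋·⌊(n-3)/2⌋ / 4`. -/
def Z (n : ℕ) : ℕ := (n / 2) * ((n - 1) / 2) * ((n - 2) / 2) * ((n - 3) / 2) / 4

open Finset

theorem sum_range_add_choose_eq (t k : ℕ) :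
    ∑ i ∈ range t, (i + k).choose k = (t + k).choose (k + 1) := by
  cases t with
  | zero => simp
  | succ t => rw [Nat.sum_range_add_choose, Nat.add_right_comm]

theorem mul_choose_le_sum_range {f : ℕ → ℕ} {c j t : ℕ}
    (h : ∀ i < t, c * (i + j).choose j ≤ f i) :
    c * (t + j).choose (j + 1) ≤ ∑ i ∈ range t, f i := by
  rw [← sum_range_add_choose_eq, mul_sum]
  exact sum_le_sum fun i hi => h i (mem_range.1 hi)

section Field

variable {K : Type*} [Field K] [CharZero K]

theorem cast_add_three_choose_three (t : ℕ) :
    ((t + 3).choose 3 : K) = (t + 3) * (t + 2) * (t + 1) / 6 := by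
  rw [Nat.cast_choose_eq_ascPochhammer_div]
  simp [ascPochhammer_succ_right, Nat.factorial]
  ring

theorem cast_add_three_choose_four (t : ℕ) :
    ((t + 3).choose 4 : K) = (t + 3) * (t + 2) * (t + 1) * t / 24 := by
  rw [Nat.cast_choose_eq_ascPochhammer_div]
  simp [ascPochhammer_succ_right, Nat.factorial]
  ring

theorem cast_Z_two_mul_add_four (a : ℕ) :
    (Z (2 * a + 4) : K) = (a + 2) * (a + 1) ^ 2 * a / 4 := by
  have hZ : Z (2 * a + 4) = (a + 1) * (a + 1 + 1) * (a * (a + 1)) / 4 := by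
    unfold Z
    rw [show (2 * a + 4) / 2 = a + 2 by omega, show (2 * a + 4 - 1) / 2 = a + 1 by omega,
      show (2 * a + 4 - 2) / 2 = a + 1 by omega, show (2 * a + 4 - 3) / 2 = a by omega]
    ring_nf
  have hdvd : 2 * 2 ∣ (a + 1) * (a + 1 + 1) * (a * (a + 1)) :=
    mul_dvd_mul (even_iff_two_dvd.1 (Nat.even_mul_succ_self _))
      (even_iff_two_dvd.1 (Nat.even_mul_succ_self _))
  rw [hZ, Nat.cast_div hdvd (by norm_num)]
  push_cast; ring

theorem cast_Z_two_mul_add_three (a : ℕ) : (Z (2 * a + 3) : K) = ((a + 1) * a) ^ 2 / 4 := by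
  have hZ : Z (2 * a + 3) = a * (a + 1) * (a * (a + 1)) / 4 := by
    unfold Z
    rw [show (2 * a + 3) / 2 = a + 1 by omega, show (2 * a + 3 - 1) / 2 = a + 1 by omega,
      show (2 * a + 3 - 2) / 2 = a by omega, show (2 * a + 3 - 3) / 2 = a by omega]
    ring_nf
  have hdvd : 2 * 2 ∣ a * (a + 1) * (a * (a + 1)) :=
    mul_dvd_mul (even_iff_two_dvd.1 (Nat.even_mul_succ_self _))
      (even_iff_two_dvd.1 (Nat.even_mul_succ_self _))
  rw [hZ, Nat.cast_div hdvd (by norm_num)]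
  push_cast; ring

end Field

section OrderedField

variable {K : Type*} [Field K] [LinearOrder K] [IsStrictOrderedRing K]

theorem le_cast_of_three_mul_choose_le {k m : ℕ} (h : 3 * (k + 3).choose 3 ≤ m) :
    ((k + 3) * (k + 2) * (k + 1) / 2 : K) ≤ m := by
  have h' : ((3 * (k + 3).choose 3 : ℕ) : K) ≤ m := by exact_mod_cast h
  rw [Nat.cast_mul, cast_add_three_choose_three] at h'
  push_cast at h' ⊢
  linarith

theorem le_sum_range_cast_of_three_mul_choose_le {f : ℕ → ℕ} {t : ℕ}
    (h : ∀ k < t, 3 * (k + 3).choose 3 ≤ f k) :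
    ((t + 3) * (t + 2) * (t + 1) * t / 8 : K) ≤ ∑ k ∈ range t, (f k : K) := by
  have h' : ((3 * (t + 3).choose 4 : ℕ) : K) ≤ ((∑ k ∈ range t, f k : ℕ) : K) :=
    Nat.cast_le.2 (mul_choose_le_sum_range h)
  rw [Nat.cast_mul, cast_add_three_choose_four, Nat.cast_sum] at h'
  push_cast at h' ⊢
  linarith

end OrderedField

theorem stmt5_general (n : ℕ) (hn : 5 ≤ n) (F : ℕ → ℕ)
    (cr : ℚ)
    (hcr : cr = 2 * ∑ k ∈ Finset.range (n / 2 - 1), (F k : ℚ)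
      - (1 / 2) * (n.choose 2 : ℚ) * ((n - 2) / 2 : ℕ)
      - (1 / 2) * (1 + (-1 : ℚ) ^ n) * (F (n / 2 - 2) : ℚ))
    (hbound : ∀ k, k ≤ (n - 3) / 2 → 3 * (k + 3).choose 3 ≤ F k) :
    (Z n : ℚ) ≤ cr := by
  obtain ⟨a, rfl | rfl⟩ : ∃ a, n = 2 * a + 4 ∨ n = 2 * a + 3 := ⟨(n - 3) / 2, by omega⟩
  · have hsum : ((a + 3) * (a + 2) * (a + 1) * a / 8 : ℚ) ≤ ∑ k ∈ range a, (F k : ℚ) :=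
      le_sum_range_cast_of_three_mul_choose_le (t := a) fun k hk => hbound k (by omega)
    have hlast : ((a + 3) * (a + 2) * (a + 1) / 2 : ℚ) ≤ F a :=
      le_cast_of_three_mul_choose_le (hbound a (by omega))
    rw [show (2 * a + 4) / 2 - 1 = a + 1 by omega, show (2 * a + 4) / 2 - 2 = a by omega,
      show (2 * a + 4 - 2) / 2 = a + 1 by omega, sum_range_succ,
      Even.neg_one_pow ⟨a + 2, by ring⟩, Nat.cast_choose_two] at hcr
    rw [cast_Z_two_mul_add_four, hcr]
    push_cast
    linarith
  · have hsum : ((a + 3) * (a + 2) * (a + 1) * a / 8 : ℚ) ≤ ∑ k ∈ range a, (F k : ℚ) :=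
      le_sum_range_cast_of_three_mul_choose_le (t := a) fun k hk => hbound k (by omega)
    rw [show (2 * a + 3) / 2 - 1 = a by omega, show (2 * a + 3 - 2) / 2 = a by omega,
      Odd.neg_one_pow ⟨a + 1, by ring⟩, Nat.cast_choose_two] at hcr
    rw [cast_Z_two_mul_add_three, hcr]
    push_cast
    linarith

theorem stmt5 (n : ℕ) (hn : 5 ≤ n) (E F : ℕ → ℕ)
    (hF : ∀ k, F k = ∑ i ∈ Finset.range (k + 1), (k + 1 - i) * E i)
    (cr : ℚ)
    (hcr : cr = 2 * ∑ k ∈ Finset.range (n / 2 - 1), (F k : ℚ)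
      - (1 / 2) * (n.choose 2 : ℚ) * ((n - 2) / 2 : ℕ)
      - (1 / 2) * (1 + (-1 : ℚ) ^ n) * (F (n / 2 - 2) : ℚ))
    (hbound : ∀ k, k ≤ (n - 3) / 2 → 3 * (k + 3).choose 3 ≤ F k) :
    (Z n : ℚ) ≤ cr :=
  stmt5_general n hn F cr hcr hbound
end

section
/- For every even n = 2m with m ≥ 2: 2·∑_{k=0}^{m-2} 3·C(k+3,3) − (1/2)·C(2m,2)·(m-1) − 3·C(m+1,3) ≥ Z(2m), with equality. -/
namespace Nat

variable (K : Type*) [Field K] [CharZero K]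

theorem cast_choose_three (a : ℕ) : (a.choose 3 : K) = a * (a - 1) * (a - 2) / 6 := by
  rw [cast_choose_eq_descPochhammer_div]
  simp [descPochhammer_succ_right, factorial]

theorem cast_choose_four (a : ℕ) :
    (a.choose 4 : K) = a * (a - 1) * (a - 2) * (a - 3) / 24 := by
  rw [cast_choose_eq_descPochhammer_div]
  simp [descPochhammer_succ_right, factorial]

end Nat

theorem Z_two_mul (m : ℕ) : Z (2 * m) = m.choose 2 * (m - 1).choose 2 := by
  have h1 : (2 * m - 1) / 2 = m - 1 := by omega
  have h2 : (2 * m - 2) / 2 = m - 1 := by omega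
  have h3 : (2 * m - 3) / 2 = m - 1 - 1 := by omega
  rw [Z, Nat.mul_div_cancel_left m two_pos, h1, h2, h3, Nat.choose_two_right,
    Nat.choose_two_right, Nat.div_mul_div_comm m.even_mul_pred_self.two_dvd
      (m - 1).even_mul_pred_self.two_dvd]
  ring_nf

theorem stmt6_general (m : ℕ) :
    2 * ∑ k ∈ Finset.range (m - 1), (3 * (k + 3).choose 3 : ℚ)
      - (1 / 2) * ((2 * m).choose 2 : ℚ) * ((m : ℚ) - 1)
      - 3 * ((m + 1).choose 3 : ℚ) = (Z (2 * m) : ℚ) := by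
  rcases Nat.lt_or_ge m 2 with hm | hm
  · interval_cases m <;> simp [Z, Nat.choose_eq_zero_of_lt]
  obtain ⟨a, rfl⟩ := Nat.exists_eq_add_of_le' hm
  have hockey_stick : ∑ k ∈ Finset.range (a + 2 - 1), (k + 3).choose 3 = (a + 4).choose 4 :=
    Nat.sum_range_add_choose a 3
  rw [← Finset.mul_sum, ← Nat.cast_sum, hockey_stick, Z_two_mul, Nat.add_succ_sub_one]
  push_cast [Nat.cast_choose_two, Nat.cast_choose_three, Nat.cast_choose_four]
  ring

theorem stmt6 (m : ℕ) (hm : 2 ≤ m) :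
    2 * ∑ k ∈ Finset.range (m - 1), (3 * (k + 3).choose 3 : ℚ)
      - (1 / 2) * ((2 * m).choose 2 : ℚ) * ((m : ℚ) - 1)
      - 3 * ((m + 1).choose 3 : ℚ) = (Z (2 * m) : ℚ) :=
  stmt6_general m
end

section
/- In a simple graph drawing of K_n in the plane viewed combinatorially: if S = {v₁, …, v_s} is a set of vertices and C = v₁v₂…v_s is a cycle such that the edge v_s v₁ has no crossings and, for each k = 1, …, s−1, every crossing on edge v_k v_{k+1} involves an edge v_i v_j of C with i < k and j > k+1, then for all 1 ≤ i < j ≤ s, in the subdrawing D_{ij} (obtained by deleting v₁,…,v_{i−1},v_{j+1},…,v_s) none of the edges v₁v₂,…,v_{i−1}v_i, v_jv_{j+1},…,v_{s−1}v_s is crossed by any remaining edge. -/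
/-!
An edge `v_t v_{t+1}` of the path can only be crossed by a chord `v_a v_b` with `a < t` and
`b > t + 1`. For `t < i` the endpoint `v_a` is deleted in `D_{ij}`, and for `t ≥ j` the
endpoint `v_b` is, so no such chord survives in `D_{ij}`.
-/

/-- The vertex `u` survives in `D_{ij}`: it is one of `v_i, …, v_j` or does not lie on the cycle. -/
def SurvivesIn {n : ℕ} (v : ℕ → Fin n) (s i j : ℕ) (u : Fin n) : Prop :=
  (∃ l, i ≤ l ∧ l ≤ j ∧ u = v l) ∨ ∀ l, 1 ≤ l → l ≤ s → u ≠ v l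

lemma not_survivesIn_of_not_mem_Icc {n s i j a : ℕ} {v : ℕ → Fin n}
    (hinj : ∀ a b, 1 ≤ a → a ≤ s → 1 ≤ b → b ≤ s → v a = v b → a = b)
    (hi : 1 ≤ i) (hjs : j ≤ s) (ha1 : 1 ≤ a) (has : a ≤ s) (hout : a < i ∨ j < a) :
    ¬ SurvivesIn v s i j (v a) := by
  rintro (⟨l, hil, hlj, heq⟩ | hoff)
  · have := hinj a l ha1 has (by omega) (by omega) heq
    omega
  · exact hoff a ha1 has rfl

theorem stmt12_general (n s : ℕ)
    -- `cross e f` : the edges `e` and `f` cross each other in the drawing `D`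
    (cross : Sym2 (Fin n) → Sym2 (Fin n) → Prop)
    -- the cycle `C = v₁ v₂ … v_s` (indices `1, …, s`), with distinct vertices
    (v : ℕ → Fin n)
    (hinj : ∀ a b, 1 ≤ a → a ≤ s → 1 ≤ b → b ≤ s → v a = v b → a = b)
    -- (ii) every crossing on `v_k v_{k+1}` involves an edge `v_i v_j` with `i < k` and `j > k+1`
    (hcyc : ∀ k, 1 ≤ k → k ≤ s - 1 → ∀ e, cross s(v k, v (k + 1)) e →
      ∃ a b, 1 ≤ a ∧ a < k ∧ k + 1 < b ∧ b ≤ s ∧ e = s(v a, v b)) :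
    -- conclusion: in `D_{ij}`, the path edges `v₁v₂, …, v_{i-1}v_i, v_jv_{j+1}, …, v_{s-1}v_s`
    -- are crossed by no remaining edge
    ∀ i j, 1 ≤ i → i < j → j ≤ s →
      ∀ t, ((1 ≤ t ∧ t ≤ i - 1) ∨ (j ≤ t ∧ t ≤ s - 1)) →
        ∀ f : Sym2 (Fin n),
          -- `f` is an edge of the subdrawing `D_{ij}`: both of its endpoints remain
          (∀ u, u ∈ f → (∃ l, i ≤ l ∧ l ≤ j ∧ u = v l) ∨
            (∀ l, 1 ≤ l → l ≤ s → u ≠ v l)) →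
          ¬ cross s(v t, v (t + 1)) f := by
  intro i j hi hij hjs t ht f hf hcross
  obtain ⟨a, b, ha1, hat, hbt, hbs, rfl⟩ := hcyc t (by omega) (by omega) f hcross
  rcases ht with ⟨-, hti⟩ | ⟨hjt, -⟩
  · exact not_survivesIn_of_not_mem_Icc hinj hi hjs ha1 (by omega) (.inl (by omega))
      (hf (v a) (Sym2.mem_mk_left _ _))
  · exact not_survivesIn_of_not_mem_Icc hinj hi hjs (by omega) hbs (.inr (by omega))
      (hf (v b) (Sym2.mem_mk_right _ _))

theorem stmt12 (n s : ℕ) (hs : 3 ≤ s) (hsn : s ≤ n)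
    -- `cross e f` : the edges `e` and `f` cross each other in the drawing `D`
    (cross : Sym2 (Fin n) → Sym2 (Fin n) → Prop)
    (hsym : ∀ e f, cross e f → cross f e)
    -- the cycle `C = v₁ v₂ … v_s` (indices `1, …, s`), with distinct vertices
    (v : ℕ → Fin n)
    (hinj : ∀ a b, 1 ≤ a → a ≤ s → 1 ≤ b → b ≤ s → v a = v b → a = b)
    -- (i) the edge `v_s v₁` has no crossings
    (hfree : ∀ e, ¬ cross s(v s, v 1) e)
    -- (ii) every crossing on `v_k v_{k+1}` involves an edge `v_i v_j` with `i < k` and `j > k+1`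
    (hcyc : ∀ k, 1 ≤ k → k ≤ s - 1 → ∀ e, cross s(v k, v (k + 1)) e →
      ∃ a b, 1 ≤ a ∧ a < k ∧ k + 1 < b ∧ b ≤ s ∧ e = s(v a, v b)) :
    -- conclusion: in `D_{ij}`, the path edges `v₁v₂, …, v_{i-1}v_i, v_jv_{j+1}, …, v_{s-1}v_s`
    -- are crossed by no remaining edge
    ∀ i j, 1 ≤ i → i < j → j ≤ s →
      ∀ t, ((1 ≤ t ∧ t ≤ i - 1) ∨ (j ≤ t ∧ t ≤ s - 1)) →
        ∀ f : Sym2 (Fin n),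
          -- `f` is an edge of the subdrawing `D_{ij}`: both of its endpoints remain
          (∀ u, u ∈ f → (∃ l, i ≤ l ∧ l ≤ j ∧ u = v l) ∨
            (∀ l, 1 ≤ l → l ≤ s → u ≠ v l)) →
          ¬ cross s(v t, v (t + 1)) f :=
  stmt12_general n s cross v hinj hcyc
end
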